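/- arXiv:math/0401310 — 4 statements merged into one kernel-verified Lean document; each statement's English description precedes it below -/
import Mathlib

section
/- For any real polynomial g with only real zeros x_1,...,x_k (with multiplicity) and any real x that is not a zero of g, one has (g'(x)^2 - g(x)g''(x))/g(x)^2 = \sum_{i=1}^k 1/(x - x_i)^2, and in particular g'(x)^2 - g(x)g''(x) > 0 when k \ge 1. -/
open Polynomial

private lemma laguerre_aux (k : ℕ) (c : ℝ) (r : Fin k → ℝ) (x : ℝ)
    (hx : (C c * ∏ i, (X - C (r i))).eval x ≠ 0) :
    ((derivative (C c * ∏ i, (X - C (r i)))).eval x ^ 2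
        - (C c * ∏ i, (X - C (r i))).eval x
          * (derivative (derivative (C c * ∏ i, (X - C (r i))))).eval x)
      / ((C c * ∏ i, (X - C (r i))).eval x) ^ 2
      = ∑ i, 1 / (x - r i) ^ 2 := by
  induction k with
  | zero => simp
  | succ n ih =>
    have hfac : (C c * ∏ i : Fin (n+1), (X - C (r i)))
        = (X - C (r 0)) * (C c * ∏ i : Fin n, (X - C (r i.succ))) := by
      rw [Fin.prod_univ_succ]; ring
    set h : Polynomial ℝ := C c * ∏ i : Fin n, (X - C (r i.succ)) with hh
    have hxh : h.eval x ≠ 0 := by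
      intro h0
      apply hx
      rw [hfac, eval_mul, h0, mul_zero]
    have hxa : x - r 0 ≠ 0 := by
      intro h0
      apply hx
      rw [hfac, eval_mul]
      simp [sub_eq_zero.mp h0]
    have ihn := ih (fun i => r i.succ) (by rw [← hh]; exact hxh)
    rw [← hh] at ihn
    set a := x - r 0 with ha
    set H := h.eval x with hH
    set A := (derivative h).eval x with hA
    set B := (derivative (derivative h)).eval x with hB
    set S := ∑ i : Fin n, 1 / (x - r i.succ) ^ 2 with hS
    have key : A ^ 2 - H * B = S * H ^ 2 := by
      field_simp at ihn
      linarith [ihn]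
    rw [hfac, Fin.sum_univ_succ]
    have e1 : (derivative ((X - C (r 0)) * h)) = h + (X - C (r 0)) * derivative h := by
      rw [derivative_mul]; simp
    have e2 : derivative (h + (X - C (r 0)) * derivative h)
        = 2 * derivative h + (X - C (r 0)) * derivative (derivative h) := by
      rw [derivative_add, derivative_mul]; simp; ring
    rw [e1, e2]
    simp only [eval_add, eval_mul, eval_sub, eval_X, eval_C, eval_ofNat, eval_one]
    rw [← ha, ← hH, ← hA, ← hB, ← hS]
    have expand : (H + a * A) ^ 2 - a * H * (2 * A + a * B)
        = H ^ 2 + a ^ 2 * (A ^ 2 - H * B) := by ring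
    rw [expand, key]
    field_simp

theorem laguerre_inequality (k : ℕ) (c : ℝ) (hc : c ≠ 0) (r : Fin k → ℝ)
    (g : Polynomial ℝ) (hg : g = C c * ∏ i, (X - C (r i)))
    (x : ℝ) (hx : g.eval x ≠ 0) :
    ((derivative g).eval x ^ 2 - g.eval x * (derivative (derivative g)).eval x)
        / (g.eval x) ^ 2 = ∑ i, 1 / (x - r i) ^ 2 ∧
    (1 ≤ k →
      0 < (derivative g).eval x ^ 2 - g.eval x * (derivative (derivative g)).eval x) := by
  subst hg
  have main := laguerre_aux k c r x hx
  refine ⟨main, fun hk => ?_⟩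
  have hroot : ∀ i : Fin k, x - r i ≠ 0 := by
    intro i h0
    apply hx
    rw [eval_mul]
    have : ((X : ℝ[X]) - C (r i)).eval x = 0 := by simp [sub_eq_zero.mp h0]
    rw [eval_prod]
    exact mul_eq_zero_of_right _ (Finset.prod_eq_zero (Finset.mem_univ i) this)
  have hpos : 0 < ∑ i, 1 / (x - r i) ^ 2 := by
    apply Finset.sum_pos
    · intro i _
      have := hroot i
      positivity
    · exact Finset.univ_nonempty_iff.mpr (Fin.pos_iff_nonempty.mp hk)
  have heq := main
  rw [div_eq_iff (pow_ne_zero 2 hx)] at heq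
  rw [heq]
  exact mul_pos hpos (pow_two_pos_of_ne_zero hx)
end

section
/- Let k \ge 1 and let x be a real number with H_k(x) \ne 0 satisfying H_k'(x) = x H_k(x) (i.e., t(x) = x). Then for every real q, the cubic inequality 2q x^3 - (2k + 2 + q^2) x^2 - 2q(2k-1) x + 2k(2k + q^2) \ge 0 holds. -/
open Polynomial

/-- Physicists' Hermite polynomials: `H 0 = 1`, `H 1 = 2X`,
`H (n+2) = 2X * H (n+1) - 2(n+1) * H n`. -/
noncomputable def physHermite : ℕ → Polynomial ℝ
  | 0 => 1
  | 1 => C 2 * X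
  | (n + 2) => C 2 * X * physHermite (n + 1) - C (2 * (n + 1) : ℝ) * physHermite n

/-! The left-hand side of the inequality is `L[g](x) / H_k(x)²` for `g = q H_k - H_k'`, where
`L[g] = g'² - g g''` is the Laguerre expression: at a point where `H_k' = x H_k`, the Hermite
equation `H'' = 2x H' - 2k H` expresses every derivative of `H_k` as a multiple of `H_k`.
Instead of appealing to the real-rootedness of `g`, `L[g] ≥ 0` is proved by induction on `k`
along the raising operator `f ↦ 2x f - f'`, which maps `H_k` to `H_{k+1}`: for every solution `f`
of the Hermite equation with parameter `ν`,
`L[2x f - f'] = 2(ν+1) (L[f] + 2f²)` and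
`L[q (2x f - f') - (2x f - f')'] = 2(ν+1) (L[q f - f'] + 2(q f - f')² + 2 L[f])`. -/

section Laguerre

variable {R : Type*} [CommRing R]

noncomputable def laguerre (f : R[X]) : R[X] := derivative f ^ 2 - f * derivative (derivative f)

def SolvesHermiteEq (ν : R) (f : R[X]) : Prop :=
  derivative (derivative f) = 2 * X * derivative f - 2 * C ν * f

noncomputable def hermiteRaise (f : R[X]) : R[X] := 2 * X * f - derivative f

namespace SolvesHermiteEq

variable {ν : R} {f : R[X]}

protected theorem derivative (hf : SolvesHermiteEq ν f) :
    SolvesHermiteEq (ν - 1) (derivative f) := by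
  unfold SolvesHermiteEq at *
  rw [hf]
  simp only [derivative_mul, derivative_C, derivative_X, derivative_ofNat, map_sub, map_one]
  linear_combination (2 * X) * hf

theorem derivative_hermiteRaise (hf : SolvesHermiteEq ν f) :
    derivative (hermiteRaise f) = 2 * (C ν + 1) * f := by
  simp only [hermiteRaise, derivative_sub, derivative_mul, derivative_X, derivative_ofNat]
  rw [hf]
  ring

theorem laguerre_hermiteRaise (hf : SolvesHermiteEq ν f) :
    laguerre (hermiteRaise f) = 2 * (C ν + 1) * (laguerre f + 2 * f ^ 2) := by
  unfold laguerre
  rw [hf.derivative_hermiteRaise]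
  simp only [hermiteRaise, derivative_mul, derivative_add, derivative_C, derivative_one,
    derivative_ofNat]
  rw [hf]
  ring

theorem laguerre_C_mul_hermiteRaise_sub_derivative (hf : SolvesHermiteEq ν f) (q : R) :
    laguerre (C q * hermiteRaise f - derivative (hermiteRaise f)) =
      2 * (C ν + 1) * (laguerre (C q * f - derivative f) + 2 * (C q * f - derivative f) ^ 2
        + 2 * laguerre f) := by
  unfold laguerre
  rw [hf.derivative_hermiteRaise]
  simp only [hermiteRaise, derivative_sub, derivative_mul, derivative_add, derivative_C,
    derivative_X, derivative_one, derivative_ofNat, derivative_zero]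
  rw [hf.derivative, hf]
  simp only [map_sub, map_one]
  ring

theorem eval_laguerre_C_mul_sub_derivative (hf : SolvesHermiteEq ν f) (q : R) {x : R}
    (hx : (derivative f).eval x = x * f.eval x) :
    (laguerre (C q * f - derivative f)).eval x = f.eval x ^ 2 *
      (2 * q * x ^ 3 - (2 * ν + 2 + q ^ 2) * x ^ 2 - 2 * q * (2 * ν - 1) * x
        + 2 * ν * (2 * ν + q ^ 2)) := by
  have h2 := congrArg (eval x) hf
  have h3 := congrArg (eval x) hf.derivative
  simp only [eval_sub, eval_mul, eval_X, eval_C, eval_ofNat] at h2 h3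
  simp only [laguerre, derivative_sub, derivative_mul, derivative_C, zero_mul, zero_add, eval_sub,
    eval_mul, eval_pow, eval_C]
  rw [h3, h2, hx]
  ring

end SolvesHermiteEq

end Laguerre

theorem physHermite_add_two (n : ℕ) :
    physHermite (n + 2) = 2 * X * physHermite (n + 1) - 2 * ((n : ℝ[X]) + 1) * physHermite n := by
  rw [physHermite, C_ofNat, C_mul, C_ofNat, C_add, C_1, C_eq_natCast]

theorem derivative_physHermite_succ :
    ∀ n : ℕ, derivative (physHermite (n + 1)) = 2 * (n + 1) * physHermite n
  | 0 => by simp [physHermite, C_ofNat]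
  | 1 => by
    rw [physHermite_add_two]
    simp only [physHermite, C_ofNat, CharP.cast_eq_zero, zero_add, mul_one, derivative_sub,
      derivative_mul, derivative_ofNat, zero_mul, derivative_X, sub_zero, Nat.cast_one]
    ring
  | n + 2 => by
    rw [physHermite_add_two]
    simp only [derivative_sub, derivative_mul, derivative_X, derivative_ofNat, derivative_add,
      derivative_natCast, derivative_one, derivative_physHermite_succ (n + 1),
      derivative_physHermite_succ n]
    push_cast
    rw [show n + 1 + 1 = n + 2 from rfl]
    linear_combination (-2 * ((n : ℝ[X]) + 2)) * physHermite_add_two n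

theorem physHermite_succ (n : ℕ) : physHermite (n + 1) = hermiteRaise (physHermite n) := by
  cases n with
  | zero => simp [hermiteRaise, physHermite, C_ofNat]
  | succ n => rw [hermiteRaise, physHermite_add_two, derivative_physHermite_succ]

theorem solvesHermiteEq_physHermite (n : ℕ) : SolvesHermiteEq (n : ℝ) (physHermite n) := by
  have h := congrArg derivative (physHermite_succ n)
  rw [derivative_physHermite_succ] at h
  simp only [hermiteRaise, derivative_sub, derivative_mul, derivative_X, derivative_ofNat,
    zero_mul, zero_add] at h
  unfold SolvesHermiteEq
  rw [C_eq_natCast]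
  linear_combination h

theorem laguerre_physHermite_nonneg (n : ℕ) (x : ℝ) : 0 ≤ (laguerre (physHermite n)).eval x := by
  induction n with
  | zero => simp [laguerre, physHermite]
  | succ n ih =>
    rw [physHermite_succ, (solvesHermiteEq_physHermite n).laguerre_hermiteRaise]
    simp only [eval_mul, eval_add, eval_pow, eval_C, eval_one, eval_ofNat]
    exact mul_nonneg (by positivity) (add_nonneg ih (by positivity))

theorem laguerre_C_mul_physHermite_sub_derivative_nonneg (n : ℕ) (q x : ℝ) :
    0 ≤ (laguerre (C q * physHermite n - derivative (physHermite n))).eval x := by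
  induction n with
  | zero => simp [laguerre, physHermite]
  | succ n ih =>
    rw [physHermite_succ,
      (solvesHermiteEq_physHermite n).laguerre_C_mul_hermiteRaise_sub_derivative]
    simp only [eval_mul, eval_add, eval_pow, eval_C, eval_one, eval_ofNat]
    have hL := laguerre_physHermite_nonneg n x
    exact mul_nonneg (by positivity)
      (add_nonneg (add_nonneg ih (by positivity)) (mul_nonneg zero_le_two hL))

theorem hermite_cubic_inequality_general (k : ℕ) (x : ℝ)
    (hx : (physHermite k).eval x ≠ 0)
    (ht : (derivative (physHermite k)).eval x = x * (physHermite k).eval x)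
    (q : ℝ) :
    0 ≤ 2 * q * x ^ 3 - (2 * k + 2 + q ^ 2) * x ^ 2 - 2 * q * (2 * k - 1) * x
        + 2 * k * (2 * k + q ^ 2) := by
  have h := laguerre_C_mul_physHermite_sub_derivative_nonneg k q x
  rw [(solvesHermiteEq_physHermite k).eval_laguerre_C_mul_sub_derivative q ht] at h
  exact nonneg_of_mul_nonneg_right h (by positivity)

theorem hermite_cubic_inequality (k : ℕ) (hk : 1 ≤ k) (x : ℝ)
    (hx : (physHermite k).eval x ≠ 0)
    (ht : (derivative (physHermite k)).eval x = x * (physHermite k).eval x)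
    (q : ℝ) :
    0 ≤ 2 * q * x ^ 3 - (2 * k + 2 + q ^ 2) * x ^ 2 - 2 * q * (2 * k - 1) * x
        + 2 * k * (2 * k + q ^ 2) :=
  hermite_cubic_inequality_general k x hx ht q
end

section
/- Let x_{kk} be the largest zero of the Hermite polynomial H_k, k \ge 1. Then \sum_{i=1}^{k-1} 1/(x_{kk} - x_{ik})^2 = (2k - x_{kk}^2 - 2)/3, where x_{1k} < ... < x_{kk} are all the zeros of H_k. -/
open Polynomial

lemma physHermite_succ_s8 (k : ℕ) : physHermite (k + 2) =
    C 2 * X * physHermite (k + 1) - C (2 * (k + 1) : ℝ) * physHermite k := rfl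

lemma physHermite_deriv (k : ℕ) :
    derivative (physHermite (k + 1)) = C (2 * (k + 1) : ℝ) * physHermite k := by
  induction k using Nat.twoStepInduction with
  | zero => simp [physHermite]
  | one =>
      rw [physHermite_succ_s8]
      simp [physHermite, derivative_mul]
      ring
  | more k ih2 ih1 =>
      rw [show k + 2 + 1 = k + 1 + 2 from rfl, physHermite_succ_s8, derivative_sub,
        derivative_mul, derivative_mul, derivative_mul, ih1, ih2, physHermite_succ_s8]
      simp only [Nat.cast_add, Nat.cast_one, derivative_X, derivative_C, C_add, C_mul,
        map_natCast, map_ofNat, map_one, derivative_ofNat, derivative_natCast, derivative_add,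
        derivative_mul, derivative_X, mul_zero, zero_mul, add_zero, zero_add, mul_one, derivative_one]
      ring

lemma physHermite_natDegree_le (k : ℕ) : (physHermite k).natDegree ≤ k := by
  induction k using Nat.twoStepInduction with
  | zero => simp [physHermite]
  | one =>
      refine le_trans (natDegree_mul_le) ?_
      simp
  | more k ih2 ih1 =>
      rw [physHermite_succ_s8]
      refine le_trans (natDegree_sub_le _ _) (max_le ?_ ?_)
      · refine le_trans natDegree_mul_le ?_
        have : (C (2:ℝ) * X).natDegree ≤ 1 := le_trans natDegree_mul_le (by simp)
        omega
      · refine le_trans natDegree_mul_le ?_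
        simp only [natDegree_C, zero_add]
        omega

lemma physHermite_coeff (k : ℕ) : (physHermite k).coeff k = 2 ^ k := by
  induction k using Nat.twoStepInduction with
  | zero => simp [physHermite]
  | one => simp [physHermite, coeff_C_mul]
  | more k ih2 ih1 =>
      rw [physHermite_succ_s8, coeff_sub, mul_assoc, coeff_C_mul, coeff_X_mul, ih1,
        coeff_C_mul, coeff_eq_zero_of_natDegree_lt
          (lt_of_le_of_lt (physHermite_natDegree_le k) (by omega))]
      ring

lemma physHermite_ode (k : ℕ) :
    derivative (derivative (physHermite (k + 1))) =
      C 2 * X * derivative (physHermite (k + 1)) - C (2 * (k + 1) : ℝ) * physHermite (k + 1) := by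
  cases k with
  | zero =>
      rw [show physHermite 1 = C 2 * X from rfl]
      simp [derivative_mul]
      ring
  | succ k =>
      rw [physHermite_deriv (k + 1), derivative_C_mul, physHermite_deriv k, physHermite_succ_s8]
      ring

lemma derivative_finset_prod {ι : Type*} [DecidableEq ι] (s : Finset ι) (f : ι → Polynomial ℝ) :
    derivative (∏ i ∈ s, f i) = ∑ i ∈ s, (∏ j ∈ s.erase i, f j) * derivative (f i) := by
  rw [Finset.prod_eq_multiset_prod, derivative_prod, Finset.sum_eq_multiset_sum]
  refine congrArg Multiset.sum (Multiset.map_congr rfl fun i hi => ?_)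
  rw [Finset.prod_eq_multiset_prod, Finset.erase_val]

theorem hermite_zero_sum (n : ℕ) (r : Fin (n + 1) → ℝ) (hmono : StrictMono r)
    (hroot : ∀ i, (physHermite (n + 1)).eval (r i) = 0) :
    ∑ i : Fin n, 1 / (r (Fin.last n) - r i.castSucc) ^ 2 =
      (2 * (n + 1 : ℝ) - r (Fin.last n) ^ 2 - 2) / 3 := by
  set p := physHermite (n + 1) with hp
  set a := r (Fin.last n) with ha
  have hcoeff : p.coeff (n + 1) = 2 ^ (n + 1) := physHermite_coeff (n + 1)
  have hcne : p.coeff (n + 1) ≠ 0 := by rw [hcoeff]; positivity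
  have hpne : p ≠ 0 := fun h => hcne (by simp [h])
  have hdeg : p.natDegree = n + 1 :=
    le_antisymm (physHermite_natDegree_le _) (le_natDegree_of_ne_zero hcne)
  -- the multiset of the r i equals the roots of p
  have hrinj : Function.Injective r := hmono.injective
  set m : Multiset ℝ := Finset.univ.val.map r with hm
  have hmcard : Multiset.card m = n + 1 := by simp [hm]
  have hmnodup : m.Nodup := (Finset.univ.nodup).map hrinj
  have hmle : m ≤ p.roots := by
    rw [Multiset.le_iff_count]
    intro x
    by_cases hx : x ∈ m
    · obtain ⟨i, _, rfl⟩ := Multiset.mem_map.mp hx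
      have h1 : Multiset.count (r i) m ≤ 1 := Multiset.nodup_iff_count_le_one.mp hmnodup _
      have h2 : 1 ≤ Multiset.count (r i) p.roots :=
        Multiset.one_le_count_iff_mem.mpr (mem_roots'.mpr ⟨hpne, hroot i⟩)
      omega
    · simp [Multiset.count_eq_zero_of_notMem hx]
  have hrootscard : Multiset.card p.roots = p.natDegree := by
    have h1 : Multiset.card p.roots ≤ p.natDegree := p.card_roots'
    have h2 := Multiset.card_le_card hmle
    omega
  have hmeq : m = p.roots := Multiset.eq_of_le_of_card_le hmle (by
    have := Multiset.card_le_card hmle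
    omega)
  set c := p.leadingCoeff with hc
  have hcne0 : c ≠ 0 := leadingCoeff_ne_zero.mpr hpne
  set q : Polynomial ℝ := ∏ i : Fin n, (X - C (r i.castSucc)) with hq
  have hfact : p = C c * (q * (X - C a)) := by
    have := (C_leadingCoeff_mul_prod_multiset_X_sub_C (p := p) hrootscard).symm
    rw [← hmeq, hm, Multiset.map_map] at this
    rw [this, ← Finset.prod_eq_multiset_prod]
    rw [show ∀ f : Fin (n+1) → Polynomial ℝ, ∏ i, f i = (∏ i : Fin n, f i.castSucc) * f (Fin.last n)
      from fun f => Fin.prod_univ_castSucc f]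
    rfl
  -- derivative formulas
  have h1 : derivative p = C c * (derivative q * (X - C a) + q) := by
    rw [hfact]
    simp only [derivative_C_mul, derivative_mul, derivative_sub, derivative_X, derivative_C]
    ring
  have h2 : derivative (derivative p) =
      C c * (derivative (derivative q) * (X - C a) + 2 * derivative q) := by
    rw [h1]
    simp only [derivative_C_mul, derivative_mul, derivative_add, derivative_sub,
      derivative_X, derivative_C]
    ring
  have h3 : derivative (derivative (derivative p)) =
      C c * (derivative (derivative (derivative q)) * (X - C a)
        + 3 * derivative (derivative q)) := by
    rw [h2]
    simp only [derivative_C_mul, derivative_mul, derivative_add, derivative_sub,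
      derivative_X, derivative_C, derivative_ofNat]
    ring
  set qa := eval a q with hqadef
  set q1 := eval a (derivative q) with hq1def
  set q2 := eval a (derivative (derivative q)) with hq2def
  have hpa : eval a p = 0 := hroot (Fin.last n)
  have hode := physHermite_ode n
  rw [show physHermite (n+1) = p from rfl] at hode
  -- eval the ODE at a
  have ev2 : c * (2 * q1) = 2 * a * (c * qa) := by
    have h := congrArg (eval a) hode
    rw [h2, h1] at h
    simp [hpa] at h
    simp [hq1def, hqadef]
    linarith [h]
  have hq1a : q1 = a * qa := by
    have := mul_left_cancel₀ hcne0 (by linarith [ev2] :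
      c * (2 * q1) = c * (2 * (a * qa)))
    linarith
  -- eval the derivative of the ODE at a
  have ev3 : 3 * q2 = (2 + 4 * a ^ 2 - 2 * (n + 1 : ℝ)) * qa := by
    have h := congrArg (fun g => eval a (derivative g)) hode
    simp only [derivative_sub, derivative_mul, derivative_C_mul, derivative_X,
      derivative_C] at h
    rw [h3, h2, h1] at h
    simp [hpa] at h
    have h' := mul_left_cancel₀ hcne0 (show c * (3 * q2)
        = c * ((2 + 4 * a ^ 2 - 2 * (n + 1 : ℝ)) * qa) by
      rw [← hqadef, ← hq1def, ← hq2def, hq1a] at h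
      nlinarith [h])
    exact h'
  -- sums
  have hd : ∀ i : Fin n, 0 < a - r i.castSucc :=
    fun i => sub_pos.mpr (hmono (Fin.castSucc_lt_last i))
  have hdne : ∀ i : Fin n, a - r i.castSucc ≠ 0 := fun i => ne_of_gt (hd i)
  have hqa : qa = ∏ i : Fin n, (a - r i.castSucc) := by
    rw [hqadef, hq, eval_prod]
    simp
  have hqane : qa ≠ 0 := by
    rw [hqa]
    exact Finset.prod_ne_zero_iff.mpr fun i _ => hdne i
  have key : ∀ i : Fin n, ∏ j ∈ Finset.univ.erase i, (a - r j.castSucc)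
      = qa * (a - r i.castSucc)⁻¹ := by
    intro i
    rw [hqa, ← Finset.mul_prod_erase _ _ (Finset.mem_univ i),
      mul_comm (a - r i.castSucc), mul_assoc, mul_inv_cancel₀ (hdne i), mul_one]
  have key2 : ∀ i : Fin n, ∀ j ∈ Finset.univ.erase i,
      ∏ k ∈ (Finset.univ.erase i).erase j, (a - r k.castSucc)
        = qa * ((a - r i.castSucc)⁻¹ * (a - r j.castSucc)⁻¹) := by
    intro i j hj
    have e : (a - r j.castSucc) * ∏ k ∈ (Finset.univ.erase i).erase j, (a - r k.castSucc)
        = qa * (a - r i.castSucc)⁻¹ :=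
      (Finset.mul_prod_erase (Finset.univ.erase i) (fun k => a - r k.castSucc) hj).trans (key i)
    have e2 := congrArg (fun x => (a - r j.castSucc)⁻¹ * x) e
    rw [inv_mul_cancel_left₀ (hdne j)] at e2
    rw [e2]
    ring
  have hdq : derivative q = ∑ i : Fin n, ∏ j ∈ Finset.univ.erase i, (X - C (r j.castSucc)) := by
    rw [hq, derivative_finset_prod]
    simp
  have hSq1 : q1 = qa * ∑ i : Fin n, (a - r i.castSucc)⁻¹ := by
    rw [hq1def, hdq, eval_finset_sum, Finset.mul_sum]
    refine Finset.sum_congr rfl fun i _ => ?_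
    rw [eval_prod]
    simpa using key i
  have hS : ∑ i : Fin n, (a - r i.castSucc)⁻¹ = a := by
    have : qa * (∑ i : Fin n, (a - r i.castSucc)⁻¹) = qa * a := by
      rw [← hSq1, hq1a]; ring
    exact mul_left_cancel₀ hqane this
  have hddq : derivative (derivative q) = ∑ i : Fin n, ∑ j ∈ Finset.univ.erase i,
      ∏ k ∈ (Finset.univ.erase i).erase j, (X - C (r k.castSucc)) := by
    rw [hdq, derivative_sum]
    refine Finset.sum_congr rfl fun i _ => ?_
    rw [derivative_finset_prod]
    simp
  have hTq2 : q2 = qa * ∑ i : Fin n, ∑ j ∈ Finset.univ.erase i,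
      (a - r i.castSucc)⁻¹ * (a - r j.castSucc)⁻¹ := by
    rw [hq2def, hddq, eval_finset_sum, Finset.mul_sum]
    refine Finset.sum_congr rfl fun i _ => ?_
    rw [eval_finset_sum, Finset.mul_sum]
    refine Finset.sum_congr rfl fun j hj => ?_
    rw [eval_prod]
    simpa using key2 i j hj
  set T := ∑ i : Fin n, ∑ j ∈ Finset.univ.erase i,
      (a - r i.castSucc)⁻¹ * (a - r j.castSucc)⁻¹ with hT
  have hTval : T = (2 + 4 * a ^ 2 - 2 * (n + 1 : ℝ)) / 3 := by
    have h : qa * (3 * T) = qa * (2 + 4 * a ^ 2 - 2 * (n + 1 : ℝ)) := by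
      rw [show qa * (3 * T) = 3 * (qa * T) by ring, ← hTq2]
      linarith [ev3]
    have := mul_left_cancel₀ hqane h
    linarith
  -- diagonal splitting
  have hsplit : (∑ i : Fin n, (a - r i.castSucc)⁻¹) ^ 2
      = (∑ i : Fin n, ((a - r i.castSucc)⁻¹) ^ 2) + T := by
    rw [sq, Finset.sum_mul_sum, hT, ← Finset.sum_add_distrib]
    refine Finset.sum_congr rfl fun i _ => ?_
    rw [← Finset.add_sum_erase _ _ (Finset.mem_univ i)]
    ring
  have hgoal : ∑ i : Fin n, 1 / (a - r i.castSucc) ^ 2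
      = ∑ i : Fin n, ((a - r i.castSucc)⁻¹) ^ 2 := by
    refine Finset.sum_congr rfl fun i _ => ?_
    rw [one_div, inv_pow]
  have hfin : (∑ i : Fin n, ((a - r i.castSucc)⁻¹) ^ 2) = a ^ 2 - T := by
    rw [hS] at hsplit
    linarith
  rw [hgoal, hfin, hTval]
  ring
end

section
/- Let k \ge 6, and suppose x = \omega > 0 satisfies H_k'(\omega) = \omega H_k(\omega) with H_k(\omega) \ne 0 and \omega < (m^4 - 1/3)^{3/2} m^{-3} where m = (k + \sqrt{k^2+1/27})^{1/6}. Then y(\omega) = 2k - \omega^2 > m^2 - 1/(3m^2) > 2. -/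
open Polynomial

set_option maxHeartbeats 1000000 in
theorem y_omega_bound (k : ℕ) (hk : 6 ≤ k) (w : ℝ) (hw0 : 0 < w)
    (hne : (physHermite k).eval w ≠ 0)
    (ht : (derivative (physHermite k)).eval w = w * (physHermite k).eval w)
    (hwlt : w < ((((k : ℝ) + Real.sqrt ((k : ℝ) ^ 2 + 1 / 27)) ^ ((1 : ℝ) / 6)) ^ 4
          - 1 / 3) ^ ((3 : ℝ) / 2)
        / (((k : ℝ) + Real.sqrt ((k : ℝ) ^ 2 + 1 / 27)) ^ ((1 : ℝ) / 6)) ^ 3) :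
    let m : ℝ := ((k : ℝ) + Real.sqrt ((k : ℝ) ^ 2 + 1 / 27)) ^ ((1 : ℝ) / 6)
    m ^ 2 - 1 / (3 * m ^ 2) < 2 * (k : ℝ) - w ^ 2 ∧
      (2 : ℝ) < m ^ 2 - 1 / (3 * m ^ 2) := by
  intro m
  set K : ℝ := (k : ℝ) with hKdef
  have hK : (6 : ℝ) ≤ K := by rw [hKdef]; exact_mod_cast hk
  set s : ℝ := Real.sqrt (K ^ 2 + 1 / 27) with hsdef
  have hs0 : 0 ≤ s := Real.sqrt_nonneg _
  have hs2 : s ^ 2 = K ^ 2 + 1 / 27 := Real.sq_sqrt (by positivity)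
  have hsK : K ≤ s := by
    nlinarith [Real.sq_sqrt (show (0:ℝ) ≤ K ^ 2 + 1/27 by positivity)]
  have hA : (0 : ℝ) < K + s := by linarith
  have hm0 : 0 < m := Real.rpow_pos_of_pos hA _
  have hm6 : m ^ 6 = K + s := by
    rw [show m = (K + s) ^ ((1:ℝ)/6) from rfl, ← Real.rpow_natCast ((K+s) ^ ((1:ℝ)/6)) 6,
      ← Real.rpow_mul hA.le]
    norm_num
  have hm6ge : (12 : ℝ) ≤ m ^ 6 := by rw [hm6]; linarith
  have hm1 : (1 : ℝ) ≤ m := by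
    by_contra h
    push_neg at h
    have := pow_le_one₀ (n := 6) hm0.le h.le
    linarith
  have h2K : 2 * K * m ^ 6 = m ^ 12 - 1 / 27 := by
    have : m ^ 12 = (K + s) ^ 2 := by rw [← hm6]; ring
    nlinarith [hs2]
  -- the upper bound R
  have hm43 : (0 : ℝ) ≤ m ^ 4 - 1/3 := by nlinarith [pow_le_pow_left₀ zero_le_one hm1 4]
  have hRsq : ((m ^ 4 - 1/3) ^ ((3:ℝ)/2)) ^ 2 = (m ^ 4 - 1/3) ^ 3 := by
    rw [← Real.rpow_natCast ((m ^ 4 - 1/3) ^ ((3:ℝ)/2)) 2, ← Real.rpow_mul hm43]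
    norm_num
  have hR0 : 0 < (m ^ 4 - 1/3) ^ ((3:ℝ)/2) / m ^ 3 := lt_trans hw0 hwlt
  have hw2 : w ^ 2 < (m ^ 4 - 1/3) ^ 3 / m ^ 6 := by
    have h1 : w ^ 2 < ((m ^ 4 - 1/3) ^ ((3:ℝ)/2) / m ^ 3) ^ 2 :=
      pow_lt_pow_left₀ hwlt hw0.le (by norm_num)
    calc w ^ 2 < ((m ^ 4 - 1/3) ^ ((3:ℝ)/2) / m ^ 3) ^ 2 := h1
      _ = (m ^ 4 - 1/3) ^ 3 / m ^ 6 := by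
          rw [div_pow, hRsq]; ring_nf
  have hm6ne : m ^ 6 ≠ 0 := by positivity
  have hm2ne : m ^ 2 ≠ 0 := by positivity
  have key : 2 * K - (m ^ 4 - 1/3) ^ 3 / m ^ 6 = m ^ 2 - 1 / (3 * m ^ 2) := by
    field_simp
    ring_nf
    nlinarith [h2K, pow_pos hm0 2, pow_pos hm0 6]
  constructor
  · rw [← key]
    linarith [hw2]
  · have ht228 : (2.28 : ℝ) ≤ m ^ 2 := by
      nlinarith [hm6ge, pow_pos hm0 2, sq_nonneg (m ^ 2 - 2.28), sq_nonneg (m ^ 2 + 2.28)]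
    have hdl : 1 / (3 * m ^ 2) ≤ 1 / (3 * 2.28) := by
      apply one_div_le_one_div_of_le (by norm_num)
      nlinarith
    have : (1:ℝ) / (3 * 2.28) < 0.28 := by norm_num
    linarith
end
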